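/- arXiv:2312.13185 — 2 statements merged into one kernel-verified Lean document; each statement's English description precedes it below -/
import Mathlib

section
/- The two-column resource state built from U_T carries the code-space stabilizers of Eq. (17)/(21): for every N-qubit unitary T and every i = 1,…,N, the 2N-qubit state U_T (|+⟩^{⊗N} ⊗ |+⟩^{⊗N}) is a +1 eigenvector of both Z_i ⊗ (T Z_i T†) and X_i ⊗ (T X_i T†), where the first factor acts on the input register and the second on the output register. -/
open Matrix Complex
open scoped Kronecker Classical

noncomputable section

namespace QCA

/-- Computational-basis index set of an `N`-qubit register. -/
abbrev QIdx (N : ℕ) := Fin N → Fin 2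

/-- Operators (matrices) on an `N`-qubit register `(ℂ²)^{⊗N}`. -/
abbrev MatQ (N : ℕ) := Matrix (QIdx N) (QIdx N) ℂ

/-- Pauli X. -/
def Xg : Matrix (Fin 2) (Fin 2) ℂ := !![0, 1; 1, 0]

/-- Pauli Z. -/
def Zg : Matrix (Fin 2) (Fin 2) ℂ := !![1, 0; 0, -1]

/-- Pauli Y = i·X·Z. -/
def Yg : Matrix (Fin 2) (Fin 2) ℂ := Complex.I • (Xg * Zg)

/-- Hadamard gate. -/
def Hg : Matrix (Fin 2) (Fin 2) ℂ := (Real.sqrt 2 : ℂ)⁻¹ • !![1, 1; 1, -1]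

/-- Phase gate S = diag(1, i). -/
def Sg : Matrix (Fin 2) (Fin 2) ℂ := !![1, 0; 0, Complex.I]

/-- √X := H·S·H. -/
def sqrtXg : Matrix (Fin 2) (Fin 2) ℂ := Hg * Sg * Hg

/-- The ket |+⟩ = (|0⟩+|1⟩)/√2. -/
def ketPlus : Fin 2 → ℂ := fun _ => (Real.sqrt 2 : ℂ)⁻¹

/-- The bra ⟨+|. -/
def braPlus : Fin 2 → ℂ := fun a => star (ketPlus a)

/-- The product state |+⟩^{⊗ι}. -/
def ketPlusAll (ι : Type*) [Fintype ι] : (ι → Fin 2) → ℂ := fun s => ∏ i, ketPlus (s i)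

/-- Kronecker product of two vectors. -/
def kronVec {a b : Type*} (v : a → ℂ) (w : b → ℂ) : a × b → ℂ := fun p => v p.1 * w p.2

variable {ι : Type*} [Fintype ι] [DecidableEq ι]

/-- `op1 P i` acts as the one-qubit operator `P` on qubit `i` and as the identity elsewhere. -/
def op1 (P : Matrix (Fin 2) (Fin 2) ℂ) (i : ι) : Matrix (ι → Fin 2) (ι → Fin 2) ℂ :=
  fun s t => P (s i) (t i) * ∏ j ∈ Finset.univ.erase i, (if s j = t j then (1 : ℂ) else 0)

/-- Controlled-Z gate between qubits `i` and `j` (identity elsewhere). -/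
def cz2 (i j : ι) : Matrix (ι → Fin 2) (ι → Fin 2) ℂ :=
  Matrix.diagonal fun s => if s i = 1 ∧ s j = 1 then (-1 : ℂ) else 1

/-- The Z-rotation exp(iθ Z_i) on qubit `i`. -/
def rotZ (θ : ℝ) (i : ι) : Matrix (ι → Fin 2) (ι → Fin 2) ℂ :=
  NormedSpace.exp (((θ : ℂ) * Complex.I) • op1 Zg i)

/-- The layer ∏_{i=1}^{N} H_i of Hadamards on every site of a ring of `N` qubits. -/
def hadamardLayer (N : ℕ) : MatQ N := (List.ofFn fun i : Fin N => op1 Hg i).prod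

/-- The layer ∏_{i=1}^{N} CZ_{i,i+1} of controlled-Z gates on a ring of `N` qubits
(site indices mod `N`; the factors pairwise commute). -/
def czRing (N : ℕ) [NeZero N] : MatQ N := (List.ofFn fun i : Fin N => cz2 i (i + 1)).prod

/-- The layer ∏_{i=1}^{N} (√X)_i on a ring of `N` qubits. -/
def sqrtXLayer (N : ℕ) : MatQ N := (List.ofFn fun i : Fin N => op1 sqrtXg i).prod

/-- The cluster CQCA T_c = (∏ H_i)·(∏ CZ_{i,i+1}) on a ring of `N` qubits. -/
def Tc (N : ℕ) [NeZero N] : MatQ N := hadamardLayer N * czRing N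

/-- The periodic CQCA T̃_c = ∏ CZ_{i,i+1} on a ring of `N` qubits. -/
def Ttc (N : ℕ) [NeZero N] : MatQ N := czRing N

/-- The fractal CQCA T̂_c = (∏ H_i)·(∏ CZ_{i,i+1})·(∏ (√X)_i) on a ring of `N` qubits. -/
def Thc (N : ℕ) [NeZero N] : MatQ N := hadamardLayer N * czRing N * sqrtXLayer N

/-- Controlled-Z between input qubit `i` and output qubit `i` on a doubled register. -/
def czIO {N : ℕ} (i : Fin N) : Matrix (QIdx N × QIdx N) (QIdx N × QIdx N) ℂ :=
  Matrix.diagonal fun p => if p.1 i = 1 ∧ p.2 i = 1 then (-1 : ℂ) else 1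

/-- The unitary U_T = (1 ⊗ T)·(∏_i H_i^{(out)})·(∏_i CZ_{i,i}^{(in,out)}) of Eq. (16). -/
def UT {N : ℕ} (T : MatQ N) : Matrix (QIdx N × QIdx N) (QIdx N × QIdx N) ℂ :=
  ((1 : MatQ N) ⊗ₖ T) *
    (List.ofFn fun i : Fin N => (1 : MatQ N) ⊗ₖ op1 Hg i).prod *
    (List.ofFn fun i : Fin N => czIO i).prod

/-- Contraction of the input register with the product bra `⊗_i bra i`. -/
def contractIn {N : ℕ} (bra : Fin N → Fin 2 → ℂ) (v : QIdx N × QIdx N → ℂ) : QIdx N → ℂ :=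
  fun t => ∑ s : QIdx N, (∏ i, bra i (s i)) * v (s, t)

lemma diagonal_commute {α : Type*} [Fintype α] [DecidableEq α] (d e : α → ℂ) :
    Commute (Matrix.diagonal d) (Matrix.diagonal e) := by
  unfold Commute SemiconjBy
  have h : (fun i => d i * e i) = fun i => e i * d i := by funext x; ring
  rw [Matrix.diagonal_mul_diagonal, Matrix.diagonal_mul_diagonal, h]

lemma Zg_eq_diagonal : Zg = Matrix.diagonal ![1, -1] := by
  ext i j
  fin_cases i <;> fin_cases j <;> simp [Zg, Matrix.diagonal]

lemma op1_diagonal (d : Fin 2 → ℂ) (i : ι) :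
    op1 (Matrix.diagonal d) i = Matrix.diagonal (fun s => d (s i)) := by
  ext s t
  by_cases h : s = t
  · subst h
    simp [op1, Matrix.diagonal_apply_eq]
  · rw [Matrix.diagonal_apply_ne _ h]
    by_cases hi : s i = t i
    · obtain ⟨k, hk⟩ : ∃ k, s k ≠ t k := Function.ne_iff.mp h
      have hki : k ≠ i := by rintro rfl; exact hk hi
      have h0 : (if s k = t k then (1 : ℂ) else 0) = 0 := by simp [hk]
      unfold op1
      rw [Finset.prod_eq_zero (Finset.mem_erase.mpr ⟨hki, Finset.mem_univ k⟩) h0]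
      ring
    · unfold op1
      rw [Matrix.diagonal_apply_ne _ hi]
      ring

/-- The controlled-Z gate attached to an (undirected) edge `e`. -/
def czEdge {N : ℕ} (e : Sym2 (Fin N)) : MatQ N :=
  Matrix.diagonal fun s => if ∀ i ∈ e, s i = 1 then (-1 : ℂ) else 1

/-- The unitary ∏_{{i,j} ∈ E(G)} CZ_{i,j} preparing the graph state (the
factors pairwise commute, so the product over the edge set is well defined). -/
def graphUnitary {N : ℕ} (G : SimpleGraph (Fin N)) [DecidableRel G.Adj] : MatQ N :=
  G.edgeFinset.noncommProd czEdge (by intro a _ b _ _; exact diagonal_commute _ _)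

/-- The graph state |G⟩ = (∏_{{i,j} ∈ E(G)} CZ_{i,j}) |+⟩^{⊗N}. -/
def graphState {N : ℕ} (G : SimpleGraph (Fin N)) [DecidableRel G.Adj] : QIdx N → ℂ :=
  (graphUnitary G).mulVec (ketPlusAll (Fin N))

/-- The stabilizer generator K_v = X_v · ∏_{w ∈ N_G(v)} Z_w of the graph state
(the Z factors pairwise commute, so the product is well defined). -/
def stabGen {N : ℕ} (G : SimpleGraph (Fin N)) [DecidableRel G.Adj] (v : Fin N) : MatQ N :=
  op1 Xg v *
    (G.neighborFinset v).noncommProd (fun w => op1 Zg w)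
      (by
        intro a _ b _ _
        simp only [Function.onFun]
        rw [Zg_eq_diagonal, op1_diagonal, op1_diagonal]
        exact diagonal_commute _ _)

/-! Applying `CZ` between the registers and then Hadamards on the output sends
`|+⟩^{⊗N} ⊗ |+⟩^{⊗N}` to `2^{-N/2} ∑_s |s⟩|s⟩`, hence
`U_T (|+⟩^{⊗N} ⊗ |+⟩^{⊗N}) = vec (2^{-N/2} T)`, where `Matrix.vec` indexes by
(column, row), here (input, output). The identity `(A ⊗ B) vec X = vec (B X Aᵀ)` reduces
the stabilizer property of `A ⊗ T A T†` to `T A T† T Aᵀ = T`, which holds because `T` is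
unitary and `A = Z_i, X_i` satisfies `A Aᵀ = 1`. -/

theorem list_prod_ofFn_mulSingle {M : Type*} [Monoid M] {n : ℕ} (P : M) (i : Fin n) :
    (List.ofFn fun k => Pi.mulSingle k P i).prod = P := by
  induction n with
  | zero => exact i.elim0
  | succ n ih =>
    rw [List.ofFn_succ, List.prod_cons]
    cases i using Fin.cases with
    | zero => simp [(Fin.succ_ne_zero _).symm]
    | succ i => simpa [Pi.mulSingle_apply, Fin.succ_ne_zero] using ih i

theorem list_prod_ofFn_diagonal {α R : Type*} [Fintype α] [DecidableEq α] [CommSemiring R]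
    {n : ℕ} (d : Fin n → α → R) :
    (List.ofFn fun k => Matrix.diagonal (d k)).prod = Matrix.diagonal fun a => ∏ k, d k a := by
  rw [← Finset.prod_fn, ← List.prod_ofFn]
  change _ = Matrix.diagonalRingHom α R _
  rw [map_list_prod, List.map_ofFn]
  rfl

theorem list_prod_map_one_kronecker {m n R : Type*} [Fintype m] [DecidableEq m] [Fintype n]
    [DecidableEq n] [CommSemiring R] (l : List (Matrix n n R)) :
    (l.map fun B => (1 : Matrix m m R) ⊗ₖ B).prod = 1 ⊗ₖ l.prod := by
  induction l with
  | nil => simp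
  | cons B l ih =>
    rw [List.map_cons, List.prod_cons, ih, List.prod_cons, ← Matrix.mul_kronecker_mul, one_mul]

theorem kronecker_conj_mulVec_vec_smul {m n R : Type*} [Fintype m] [Fintype n] [DecidableEq m]
    [CommSemiring R] [StarRing R] {A : Matrix m m R} {T : Matrix n m R} (hA : A * Aᵀ = 1)
    (hT : Tᴴ * T = 1) (c : R) :
    (A ⊗ₖ (T * A * Tᴴ)) *ᵥ Matrix.vec (c • T) = Matrix.vec (c • T) := by
  have hconj : T * A * Tᴴ * T * Aᵀ = T := by
    rw [Matrix.mul_assoc (T * A), hT, Matrix.mul_one, Matrix.mul_assoc, hA, Matrix.mul_one]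
  rw [Matrix.kronecker_mulVec_vec, Matrix.mul_smul, Matrix.smul_mul, hconj]

section PiKronecker

variable {ι κ R : Type*} [Fintype ι] [CommSemiring R]

def piKronecker (f : ι → Matrix κ κ R) : Matrix (ι → κ) (ι → κ) R :=
  Matrix.of fun s t => ∏ i, f i (s i) (t i)

theorem piKronecker_transpose (f : ι → Matrix κ κ R) :
    (piKronecker f)ᵀ = piKronecker fun i => (f i)ᵀ := rfl

theorem piKronecker_mul [DecidableEq ι] [Fintype κ] (f g : ι → Matrix κ κ R) :
    piKronecker f * piKronecker g = piKronecker (f * g) := by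
  ext s t
  simp only [piKronecker, Matrix.mul_apply, Matrix.of_apply, Pi.mul_apply,
    Fintype.prod_sum (κ := fun _ => κ), Finset.prod_mul_distrib]

theorem piKronecker_one [DecidableEq ι] [DecidableEq κ] :
    piKronecker (fun _ : ι => (1 : Matrix κ κ R)) = 1 := by
  ext s t
  simp only [piKronecker, Matrix.of_apply, Matrix.one_apply, Finset.prod_ite_zero,
    Finset.prod_const_one, funext_iff, Finset.mem_univ, true_imp_iff]

theorem list_prod_ofFn_piKronecker [DecidableEq ι] [Fintype κ] [DecidableEq κ] {n : ℕ}
    (f : Fin n → ι → Matrix κ κ R) :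
    (List.ofFn fun k => piKronecker (f k)).prod
      = piKronecker fun i => (List.ofFn fun k => f k i).prod := by
  induction n with
  | zero => simpa using piKronecker_one.symm
  | succ n ih => simp only [List.ofFn_succ, List.prod_cons, ih, piKronecker_mul]; rfl

end PiKronecker

theorem op1_eq_piKronecker (P : Matrix (Fin 2) (Fin 2) ℂ) (i : ι) :
    op1 P i = piKronecker (Pi.mulSingle i P) := by
  ext s t
  rw [op1, piKronecker, Matrix.of_apply, ← Finset.mul_prod_erase _ _ (Finset.mem_univ i)]
  congr 1
  · simp
  · refine Finset.prod_congr rfl fun j hj => ?_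
    simp [(Finset.mem_erase.mp hj).1, Matrix.one_apply]

theorem list_prod_ofFn_op1 {N : ℕ} (P : Matrix (Fin 2) (Fin 2) ℂ) :
    (List.ofFn fun i : Fin N => op1 P i).prod = piKronecker fun _ => P := by
  simp only [op1_eq_piKronecker, list_prod_ofFn_piKronecker, list_prod_ofFn_mulSingle]

theorem op1_mul_transpose_self {P : Matrix (Fin 2) (Fin 2) ℂ} (hP : P * Pᵀ = 1) (i : ι) :
    op1 P i * (op1 P i)ᵀ = 1 := by
  let f : ι → Matrix (Fin 2) (Fin 2) ℂ := Pi.mulSingle i P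
  have hsite (j : ι) : f j * (f j)ᵀ = 1 := by
    by_cases h : j = i
    · subst h; simpa [f] using hP
    · simp [f, h]
  rw [op1_eq_piKronecker, piKronecker_transpose, piKronecker_mul, ← piKronecker_one]
  exact congrArg piKronecker (funext hsite)

theorem Zg_mul_transpose_self : Zg * Zgᵀ = 1 := by
  ext a b; fin_cases a <;> fin_cases b <;> simp [Zg, Matrix.mul_apply]

theorem Xg_mul_transpose_self : Xg * Xgᵀ = 1 := by
  ext a b; fin_cases a <;> fin_cases b <;> simp [Xg, Matrix.mul_apply]

theorem ofReal_sqrt_two_inv_mul_self :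
    (Real.sqrt 2 : ℂ)⁻¹ * (Real.sqrt 2 : ℂ)⁻¹ = 2⁻¹ := by
  rw [← mul_inv, ← Complex.ofReal_mul, Real.mul_self_sqrt zero_le_two]; norm_num

theorem Hg_mul_self : Hg * Hg = 1 := by
  ext a b
  fin_cases a <;> fin_cases b <;> simp [Hg, Matrix.mul_apply, ofReal_sqrt_two_inv_mul_self] <;>
    norm_num

theorem cz_ketPlus_ketPlus (a b : Fin 2) :
    (if a = 1 ∧ b = 1 then (-1 : ℂ) else 1) * (ketPlus a * ketPlus b)
      = (Real.sqrt 2 : ℂ)⁻¹ * Hg b a := by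
  fin_cases a <;> fin_cases b <;> simp [ketPlus, Hg, ofReal_sqrt_two_inv_mul_self]

theorem czLayer_mulVec_ketPlusAll {N : ℕ} :
    (List.ofFn fun i : Fin N => czIO i).prod *ᵥ kronVec (ketPlusAll (Fin N)) (ketPlusAll (Fin N))
      = Matrix.vec (((Real.sqrt 2 : ℂ)⁻¹) ^ N • piKronecker fun _ => Hg) := by
  ext ⟨s, t⟩
  simp only [czIO]
  rw [list_prod_ofFn_diagonal, Matrix.mulVec_diagonal]
  simp only [kronVec, ketPlusAll, Matrix.vec, Matrix.smul_apply, piKronecker, Matrix.of_apply,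
    smul_eq_mul, ← Finset.prod_mul_distrib, cz_ketPlus_ketPlus]
  simp [Finset.prod_mul_distrib]

theorem UT_mulVec_ketPlusAll {N : ℕ} (T : MatQ N) :
    UT T *ᵥ kronVec (ketPlusAll (Fin N)) (ketPlusAll (Fin N))
      = Matrix.vec (((Real.sqrt 2 : ℂ)⁻¹) ^ N • T) := by
  have hadamardLayer_out : (List.ofFn fun i : Fin N => (1 : MatQ N) ⊗ₖ op1 Hg i).prod
      = 1 ⊗ₖ piKronecker fun _ => Hg := by
    rw [List.ofFn_comp' (fun i => op1 Hg i) ((1 : MatQ N) ⊗ₖ ·), list_prod_map_one_kronecker,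
      list_prod_ofFn_op1]
  have hadamard_sq : ((piKronecker fun _ : Fin N => Hg) * piKronecker fun _ => Hg) = 1 := by
    rw [piKronecker_mul, ← piKronecker_one]
    exact congrArg piKronecker (funext fun _ => Hg_mul_self)
  rw [UT, ← Matrix.mulVec_mulVec, ← Matrix.mulVec_mulVec, czLayer_mulVec_ketPlusAll,
    hadamardLayer_out, ← Matrix.vec_mul_eq_mulVec, ← Matrix.vec_mul_eq_mulVec, Matrix.mul_smul,
    hadamard_sq, Matrix.mul_smul, Matrix.mul_one]

/-- the two-column resource state `U_T(|+⟩^{⊗N} ⊗ |+⟩^{⊗N})` is a +1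
eigenvector of `Z_i ⊗ (T Z_i T†)` and of `X_i ⊗ (T X_i T†)`. -/
theorem two_column_stabilizers {N : ℕ} (T : MatQ N)
    (hT : T ∈ Matrix.unitaryGroup (QIdx N) ℂ) (i : Fin N) :
    (op1 Zg i ⊗ₖ (T * op1 Zg i * Tᴴ)).mulVec
        ((UT T).mulVec (kronVec (ketPlusAll (Fin N)) (ketPlusAll (Fin N)))) =
      (UT T).mulVec (kronVec (ketPlusAll (Fin N)) (ketPlusAll (Fin N))) ∧
    (op1 Xg i ⊗ₖ (T * op1 Xg i * Tᴴ)).mulVec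
        ((UT T).mulVec (kronVec (ketPlusAll (Fin N)) (ketPlusAll (Fin N)))) =
      (UT T).mulVec (kronVec (ketPlusAll (Fin N)) (ketPlusAll (Fin N))) := by
  have hTT : Tᴴ * T = 1 := hT.1
  rw [UT_mulVec_ketPlusAll]
  exact ⟨kronecker_conj_mulVec_vec_smul (op1_mul_transpose_self Zg_mul_transpose_self i) hTT _,
    kronecker_conj_mulVec_vec_smul (op1_mul_transpose_self Xg_mul_transpose_self i) hTT _⟩

end QCA

end
end

section
/- Theorem 3 specialized to the cluster CQCA T_c (the resource state is the 2D cluster state): let N ≥ 3, D ≥ 2, and arrange N(D+1) qubits in columns j = 1,…,D+1, each column a ring of N qubits (row indices mod N). Let |Ψ⟩ := (∏_{j=D,…,1} U_{T_c}^{(j,j+1)}) |+⟩^{⊗N(D+1)}, where U_{T_c}^{(j,j+1)} is the unitary U_T with T = T_c acting on columns j (as input) and j+1 (as output), applied from right to left in order j = 1,…,D. Then |Ψ⟩ is a +1 eigenvector of: (i) the bulk stabilizers Z_i^{(j)} X_i^{(j+1)} Z_{i-1}^{(j+1)} Z_{i+1}^{(j+1)} Z_i^{(j+2)} for all i = 1,…,N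 and j = 1,…,D−1; (ii) the left-boundary stabilizers X_i^{(1)} Z_{i-1}^{(1)} Z_{i+1}^{(1)} Z_i^{(2)} for all i; and (iii) the right-boundary stabilizers Z_i^{(D)} X_i^{(D+1)} for all i — i.e. |Ψ⟩ is the cluster state on the N × (D+1) square lattice with periodic boundary conditions along the columns. -/
open Matrix Complex
open scoped Kronecker Classical

noncomputable section

namespace QCA

variable {ι : Type*} [Fintype ι] [DecidableEq ι]

/-- Sites of an `N × (D+1)` grid of qubits: row `i : Fin N`, column `j : Fin (D+1)`. -/
abbrev GIdx (N D : ℕ) := Fin N × Fin (D + 1)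

/-- Operators on the grid of `N × (D+1)` qubits. -/
abbrev MatG (N D : ℕ) := Matrix (GIdx N D → Fin 2) (GIdx N D → Fin 2) ℂ

/-- The cluster CQCA `T_c` acting on column `j` of the grid (row indices mod `N`). -/
def TcCol {N D : ℕ} [NeZero N] (j : Fin (D + 1)) : MatG N D :=
  (List.ofFn fun i : Fin N => op1 Hg ((i, j) : GIdx N D)).prod *
    (List.ofFn fun i : Fin N => cz2 ((i, j) : GIdx N D) ((i + 1, j) : GIdx N D)).prod

/-- The unitary `U_{T_c}^{(j,j+1)}` acting on columns `j` (input) and `j+1` (output). -/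
def UTcPair {N D : ℕ} [NeZero N] (j : Fin D) : MatG N D :=
  TcCol j.succ *
    (List.ofFn fun i : Fin N => op1 Hg ((i, j.succ) : GIdx N D)).prod *
    (List.ofFn fun i : Fin N => cz2 ((i, j.castSucc) : GIdx N D) ((i, j.succ) : GIdx N D)).prod

/-- The resource state `|Ψ⟩ = (∏_{j=D,…,1} U_{T_c}^{(j,j+1)}) |+⟩^{⊗N(D+1)}`
(applied from right to left in order `j = 1,…,D`). -/
def clusterState (N D : ℕ) [NeZero N] : (GIdx N D → Fin 2) → ℂ :=
  ((List.ofFn fun j : Fin D => UTcPair (N := N) (D := D) j).reverse.prod).mulVec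
    (ketPlusAll (GIdx N D))

/-!
Write `|Ψ⟩ = U_D ⋯ U_1 |+⟩^{⊗}`. If `U T = S U` (`SemiconjBy U T S`) and `T` fixes `φ`, then `S`
fixes `U φ`. A CZ layer conjugates `X_v` into `X_v` times `Z` on the neighbours of `v` and fixes
every `Z`; a Hadamard layer swaps `X` and `Z`. Hence `U_{T_c}` maps `X_out ↦ Z_in X_out` and
`X_in ↦ X_{out,i-1} X_{out,i+1} Z_out X_in`. Each cluster stabilizer commutes with the layers after
the one or two that touch it, and pulled back through those it becomes a product of `X`'s that
commutes with the earlier layers and fixes `|+⟩^{⊗}`.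
-/

lemma Commute.mul_mul_eq_self {M : Type*} [Monoid M] {x w : M} (h : Commute x w)
    (hx : x * x = 1) : x * w * x = w := by
  rw [h.eq, mul_assoc, hx, mul_one]

lemma semiconjBy_list_ofFn_prod {M : Type*} [Monoid M] {n : ℕ} {g : Fin n → M} {i : Fin n}
    {x y : M} (hi : SemiconjBy (g i) x y) (hx : ∀ k ≠ i, Commute (g k) x)
    (hy : ∀ k ≠ i, Commute (g k) y) : SemiconjBy (List.ofFn g).prod x y := by
  induction n with
  | zero => exact i.elim0
  | succ n ih =>
    rw [List.ofFn_succ, List.prod_cons]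
    cases i using Fin.cases with
    | zero =>
      refine hi.mul_left (Commute.list_prod_left _ _ fun z hz => ?_)
      obtain ⟨k, rfl⟩ := List.mem_ofFn.mp hz
      exact hx k.succ (Fin.succ_ne_zero k)
    | succ i =>
      exact SemiconjBy.mul_left (hy 0 (Fin.succ_ne_zero i).symm)
        (ih hi (fun k hk => hx k.succ (by simpa using hk))
          fun k hk => hy k.succ (by simpa using hk))

lemma Hg_mul_Xg : Hg * Xg = Zg * Hg := by
  ext a b
  fin_cases a <;> fin_cases b <;> simp [Hg, Xg, Zg, mul_apply, Fin.sum_univ_two]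

lemma Hg_mul_Zg : Hg * Zg = Xg * Hg := by
  ext a b
  fin_cases a <;> fin_cases b <;> simp [Hg, Xg, Zg, mul_apply, Fin.sum_univ_two]

lemma Xg_mul_Xg : Xg * Xg = 1 := by
  ext a b
  fin_cases a <;> fin_cases b <;> simp [Xg, mul_apply, Fin.sum_univ_two]

lemma Xg_apply (a b : Fin 2) : Xg a b = if b = a + 1 then 1 else 0 := by
  fin_cases a <;> fin_cases b <;> simp [Xg]

def zSign : Fin 2 → ℂ := ![1, -1]

lemma zSign_mul_add_one (x y : Fin 2) : zSign (x * y) = zSign y * zSign ((x + 1) * y) := by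
  fin_cases x <;> fin_cases y <;> simp [zSign]

lemma op1_Zg (v : ι) : op1 Zg v = diagonal fun s => zSign (s v) := by
  rw [Zg_eq_diagonal, op1_diagonal]
  rfl

omit [DecidableEq ι] in
lemma cz2_eq_diagonal (a b : ι) : cz2 a b = diagonal fun s => zSign (s a * s b) := by
  unfold cz2
  congr 1
  funext s
  generalize s a = x
  generalize s b = y
  fin_cases x <;> fin_cases y <;> simp [zSign]

def tensorOp (M : ι → Matrix (Fin 2) (Fin 2) ℂ) : Matrix (ι → Fin 2) (ι → Fin 2) ℂ :=
  Matrix.of fun s t => ∏ j, M j (s j) (t j)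

lemma tensorOp_mul (M M' : ι → Matrix (Fin 2) (Fin 2) ℂ) :
    tensorOp M * tensorOp M' = tensorOp (M * M') := by
  ext s t
  simp only [tensorOp, mul_apply, of_apply, Pi.mul_apply, ← Finset.prod_mul_distrib]
  exact (Fintype.prod_sum fun j x => M j (s j) x * M' j x (t j)).symm

lemma op1_eq_tensorOp (P : Matrix (Fin 2) (Fin 2) ℂ) (v : ι) :
    op1 P v = tensorOp (Function.update 1 v P) := by
  ext s t
  rw [tensorOp, of_apply, ← Finset.mul_prod_erase _ _ (Finset.mem_univ v), op1]
  congr 1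
  · simp
  · refine Finset.prod_congr rfl fun j hj => ?_
    simp [Function.update_of_ne (Finset.ne_of_mem_erase hj), one_apply]

lemma op1_mul_op1 (P Q : Matrix (Fin 2) (Fin 2) ℂ) (v : ι) :
    op1 P v * op1 Q v = op1 (P * Q) v := by
  rw [op1_eq_tensorOp, op1_eq_tensorOp, op1_eq_tensorOp, tensorOp_mul, ← Function.update_mul,
    mul_one]

lemma commute_op1 (P Q : Matrix (Fin 2) (Fin 2) ℂ) {v w : ι} (h : v ≠ w) :
    Commute (op1 P v) (op1 Q w) := by
  rw [Commute, SemiconjBy, op1_eq_tensorOp, op1_eq_tensorOp, tensorOp_mul, tensorOp_mul]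
  congr 1
  funext j
  by_cases hv : j = v
  · subst hv
    simp [Function.update_of_ne h]
  · by_cases hw : j = w
    · subst hw
      simp [Function.update_of_ne hv]
    · simp [Function.update_of_ne hv, Function.update_of_ne hw]

lemma op1_mul_op1_of_sq_eq_one {P : Matrix (Fin 2) (Fin 2) ℂ} (hP : P * P = 1) (v : ι) :
    op1 P v * op1 P v = 1 := by
  rw [op1_mul_op1, hP, ← diagonal_one, op1_diagonal]
  rfl

def flipBit (v : ι) (s : ι → Fin 2) : ι → Fin 2 := Function.update s v (s v + 1)

lemma op1_Xg_apply (v : ι) (s t : ι → Fin 2) :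
    op1 Xg v s t = if t = flipBit v s then 1 else 0 := by
  rw [op1, Xg_apply, Finset.prod_boole, ite_zero_mul_ite_zero, one_mul]
  congr 1
  apply propext
  simp only [flipBit, funext_iff, Function.update_apply, Finset.mem_erase, Finset.mem_univ,
    and_true, eq_comm (a := s _)]
  constructor
  · rintro ⟨hv, hj⟩ j
    by_cases h : j = v
    · subst h; simpa using hv
    · simpa [h] using hj j h
  · intro h
    exact ⟨by simpa using h v, fun j hj => by simpa [hj] using h j⟩

lemma op1_Xg_mulVec (v : ι) (f : (ι → Fin 2) → ℂ) :
    op1 Xg v *ᵥ f = fun s => f (flipBit v s) := by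
  funext s
  simp [mulVec, dotProduct, op1_Xg_apply]

lemma op1_Xg_mulVec_ketPlusAll (v : ι) : op1 Xg v *ᵥ ketPlusAll ι = ketPlusAll ι := by
  funext s
  simp [op1_Xg_mulVec, ketPlusAll, ketPlus]

lemma mulVec_ketPlusAll_of_three_Xg (u v w : ι) :
    (op1 Xg u * op1 Xg v * op1 Xg w) *ᵥ ketPlusAll ι = ketPlusAll ι := by
  simp only [← mulVec_mulVec, op1_Xg_mulVec_ketPlusAll]

lemma semiconjBy_diagonal_op1_Xg {d q : (ι → Fin 2) → ℂ} (v : ι)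
    (h : ∀ s, d s = q s * d (flipBit v s)) :
    SemiconjBy (diagonal d) (op1 Xg v) (diagonal q * op1 Xg v) := by
  unfold SemiconjBy
  ext s t
  rw [mul_assoc, diagonal_mul, diagonal_mul, mul_diagonal, op1_Xg_apply]
  split_ifs with ht
  · rw [ht, h s]; ring
  · simp

lemma semiconjBy_op1 {A P Q : Matrix (Fin 2) (Fin 2) ℂ} (h : SemiconjBy A P Q) (v : ι) :
    SemiconjBy (op1 A v) (op1 P v) (op1 Q v) := by
  rw [SemiconjBy, op1_mul_op1, op1_mul_op1, h.eq]

def hadamardOn {n : ℕ} (f : Fin n → ι) : Matrix (ι → Fin 2) (ι → Fin 2) ℂ :=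
  (List.ofFn fun k => op1 Hg (f k)).prod

lemma semiconjBy_hadamardOn {n : ℕ} {f : Fin n → ι} (hf : f.Injective)
    {P Q : Matrix (Fin 2) (Fin 2) ℂ} (h : SemiconjBy Hg P Q) (i : Fin n) :
    SemiconjBy (hadamardOn f) (op1 P (f i)) (op1 Q (f i)) :=
  semiconjBy_list_ofFn_prod (semiconjBy_op1 h _) (fun _ hk => commute_op1 _ _ (hf.ne hk))
    (fun _ hk => commute_op1 _ _ (hf.ne hk))

lemma commute_hadamardOn {n : ℕ} (f : Fin n → ι) (P : Matrix (Fin 2) (Fin 2) ℂ) {v : ι}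
    (hv : ∀ k, f k ≠ v) : Commute (hadamardOn f) (op1 P v) :=
  Commute.list_prod_left _ _ fun z hz => by
    obtain ⟨k, rfl⟩ := List.mem_ofFn.mp hz
    exact commute_op1 _ _ (hv k)

def czOn {n : ℕ} (a b : Fin n → ι) : Matrix (ι → Fin 2) (ι → Fin 2) ℂ :=
  (List.ofFn fun k => cz2 (a k) (b k)).prod

lemma czOn_eq_diagonal {n : ℕ} (a b : Fin n → ι) :
    czOn a b = diagonal fun s => ∏ k, zSign (s (a k) * s (b k)) := by
  simp only [czOn, cz2_eq_diagonal]
  rw [← Finset.prod_fn, ← List.prod_ofFn, ← diagonalRingHom_apply, map_list_prod, List.map_ofFn]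
  rfl

lemma commute_czOn_op1_Zg {n : ℕ} (a b : Fin n → ι) (v : ι) : Commute (czOn a b) (op1 Zg v) := by
  rw [czOn_eq_diagonal, op1_Zg]
  exact diagonal_commute _ _

omit [Fintype ι] in
lemma zSign_mul_eq_flipBit {a b : ι} (hab : a ≠ b) (v : ι) (s : ι → Fin 2) :
    zSign (s a * s b) = (if a = v then zSign (s b) else 1) * (if b = v then zSign (s a) else 1) *
      zSign (flipBit v s a * flipBit v s b) := by
  by_cases ha : a = v
  · subst ha
    simp only [flipBit, Function.update_self, Function.update_of_ne hab.symm,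
      if_neg hab.symm, mul_one]
    exact zSign_mul_add_one _ _
  · by_cases hb : b = v
    · subst hb
      simp only [flipBit, Function.update_self, Function.update_of_ne hab, if_neg ha, one_mul]
      rw [mul_comm (s a), mul_comm (s a)]
      exact zSign_mul_add_one _ _
    · simp [flipBit, ha, hb]

lemma semiconjBy_czOn_op1_Xg {n : ℕ} {a b : Fin n → ι} (hab : ∀ k, a k ≠ b k) (v : ι)
    {Q : Matrix (ι → Fin 2) (ι → Fin 2) ℂ}
    (hQ : Q = diagonal fun s => ∏ k, (if a k = v then zSign (s (b k)) else 1) *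
      (if b k = v then zSign (s (a k)) else 1)) :
    SemiconjBy (czOn a b) (op1 Xg v) (Q * op1 Xg v) := by
  rw [czOn_eq_diagonal, hQ]
  refine semiconjBy_diagonal_op1_Xg v fun s => ?_
  rw [← Finset.prod_mul_distrib]
  exact Finset.prod_congr rfl fun k _ => zSign_mul_eq_flipBit (hab k) v s

lemma commute_czOn_op1_Xg {n : ℕ} {a b : Fin n → ι} {v : ι} (ha : ∀ k, a k ≠ v)
    (hb : ∀ k, b k ≠ v) : Commute (czOn a b) (op1 Xg v) := by
  have h := semiconjBy_diagonal_op1_Xg (d := fun s => ∏ k, zSign (s (a k) * s (b k))) (q := 1) v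
    fun s => by simp [flipBit, Function.update_of_ne (ha _), Function.update_of_ne (hb _)]
  rwa [Pi.one_def, diagonal_one, one_mul, ← czOn_eq_diagonal] at h

section Evolution

variable {α : Type*} [Fintype α] [DecidableEq α] {n : ℕ}

/-- `g (m-1) ⋯ g 0 *ᵥ v`, the state after the first `m` layers. -/
def evolve (g : Fin n → Matrix α α ℂ) (v : α → ℂ) (m : ℕ) : α → ℂ :=
  ((List.ofFn g).take m).reverse.prod *ᵥ v

lemma evolve_zero (g : Fin n → Matrix α α ℂ) (v : α → ℂ) : evolve g v 0 = v := by
  simp [evolve]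

lemma evolve_succ (g : Fin n → Matrix α α ℂ) (v : α → ℂ) (k : Fin n) :
    evolve g v (k + 1) = g k *ᵥ evolve g v k := by
  simp [evolve, List.take_add_one, mulVec_mulVec]

lemma evolve_self (g : Fin n → Matrix α α ℂ) (v : α → ℂ) :
    evolve g v n = (List.ofFn g).reverse.prod *ᵥ v := by
  rw [evolve, List.take_of_length_le (List.length_ofFn ▸ le_rfl)]

variable {g : Fin n → Matrix α α ℂ} {v : α → ℂ}

lemma mulVec_evolve_succ {T S : Matrix α α ℂ} (k : Fin n) (h : SemiconjBy (g k) T S)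
    (hT : T *ᵥ evolve g v k = evolve g v k) : S *ᵥ evolve g v (k + 1) = evolve g v (k + 1) := by
  rw [evolve_succ, mulVec_mulVec, ← h.eq, ← mulVec_mulVec, hT]

lemma mulVec_evolve_of_commute {S : Matrix α α ℂ} {a b : ℕ} (hab : a ≤ b) (hb : b ≤ n)
    (hg : ∀ k : Fin n, a ≤ k → k < b → Commute (g k) S)
    (hS : S *ᵥ evolve g v a = evolve g v a) : S *ᵥ evolve g v b = evolve g v b := by
  induction b, hab using Nat.le_induction with
  | base => exact hS
  | succ b hab ih =>
    exact mulVec_evolve_succ ⟨b, hb⟩ (hg ⟨b, hb⟩ hab (Nat.lt_succ_self b))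
      (ih (Nat.le_of_succ_le hb) fun k hk hkb => hg k hk (hkb.trans (Nat.lt_succ_self b)))

end Evolution

lemma fin_one_ne_zero {n : ℕ} [NeZero n] (hn : 2 ≤ n) : (1 : Fin n) ≠ 0 := by
  rw [Ne, Fin.ext_iff, Fin.val_one', Fin.val_zero, Nat.mod_eq_of_lt hn]
  omega

section Grid

variable {N D : ℕ}

local notation "X[" i ", " c "]" => op1 Xg ((i, c) : GIdx _ _)
local notation "Z[" i ", " c "]" => op1 Zg ((i, c) : GIdx _ _)

def hadamardCol (c : Fin (D + 1)) : MatG N D := hadamardOn fun k : Fin N => ((k, c) : GIdx N D)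

def czCol [NeZero N] (c : Fin (D + 1)) : MatG N D :=
  czOn (fun k : Fin N => ((k, c) : GIdx N D)) fun k => (k + 1, c)

def czRows (j : Fin D) : MatG N D :=
  czOn (fun k : Fin N => ((k, j.castSucc) : GIdx N D)) fun k => (k, j.succ)

lemma UTcPair_eq [NeZero N] (j : Fin D) :
    UTcPair j = hadamardCol (N := N) j.succ * czCol j.succ * hadamardCol j.succ * czRows j :=
  rfl

lemma semiconjBy_hadamardCol {P Q : Matrix (Fin 2) (Fin 2) ℂ} (h : SemiconjBy Hg P Q) (i : Fin N)
    (c : Fin (D + 1)) :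
    SemiconjBy (hadamardCol c) (op1 P ((i, c) : GIdx N D)) (op1 Q ((i, c) : GIdx N D)) :=
  semiconjBy_hadamardOn (Prod.mk_left_injective c) h i

lemma commute_hadamardCol (P : Matrix (Fin 2) (Fin 2) ℂ) {v : GIdx N D} {c : Fin (D + 1)}
    (hv : v.2 ≠ c) : Commute (hadamardCol c) (op1 P v) :=
  commute_hadamardOn _ P fun _ h => hv (h ▸ rfl)

lemma semiconjBy_czCol [NeZero N] (hN : 2 ≤ N) (i : Fin N) (c : Fin (D + 1)) :
    SemiconjBy (czCol c) X[i, c] (Z[i + 1, c] * Z[i - 1, c] * X[i, c] : MatG N D) := by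
  refine semiconjBy_czOn_op1_Xg (fun k => ?_) _ ?_
  · simpa using fin_one_ne_zero hN
  · rw [op1_Zg, op1_Zg, diagonal_mul_diagonal]
    congr 1
    funext s
    simp only [Prod.mk.injEq, and_true, ← eq_sub_iff_add_eq, Finset.prod_mul_distrib,
      Finset.prod_ite_eq', Finset.mem_univ, if_true]

lemma commute_czCol_op1_Xg [NeZero N] {v : GIdx N D} {c : Fin (D + 1)} (hv : v.2 ≠ c) :
    Commute (czCol c) (op1 Xg v) :=
  commute_czOn_op1_Xg (fun _ h => hv (h ▸ rfl)) fun _ h => hv (h ▸ rfl)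

lemma semiconjBy_czRows_succ (i : Fin N) (j : Fin D) :
    SemiconjBy (czRows j) X[i, j.succ] (Z[i, j.castSucc] * X[i, j.succ] : MatG N D) := by
  refine semiconjBy_czOn_op1_Xg (fun k => by simp [Fin.castSucc_lt_succ.ne]) _ ?_
  rw [op1_Zg]
  congr 1
  funext s
  simp [Fin.castSucc_lt_succ.ne]

lemma semiconjBy_czRows_castSucc (i : Fin N) (j : Fin D) :
    SemiconjBy (czRows j) X[i, j.castSucc] (Z[i, j.succ] * X[i, j.castSucc] : MatG N D) := by
  refine semiconjBy_czOn_op1_Xg (fun k => by simp [Fin.castSucc_lt_succ.ne]) _ ?_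
  rw [op1_Zg]
  congr 1
  funext s
  simp [Fin.castSucc_lt_succ.ne']

lemma commute_czRows_op1_Xg {v : GIdx N D} {j : Fin D} (h₁ : v.2 ≠ j.castSucc)
    (h₂ : v.2 ≠ j.succ) : Commute (czRows j) (op1 Xg v) :=
  commute_czOn_op1_Xg (fun _ h => h₁ (h ▸ rfl)) fun _ h => h₂ (h ▸ rfl)

lemma commute_UTcPair_op1_Zg [NeZero N] {v : GIdx N D} {j : Fin D} (hv : (v.2 : ℕ) ≠ j + 1) :
    Commute (UTcPair j) (op1 Zg v) := by
  have hv' : v.2 ≠ j.succ := fun h => hv (by rw [h, Fin.val_succ])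
  rw [UTcPair_eq]
  exact (((commute_hadamardCol Zg hv').mul_left (commute_czOn_op1_Zg _ _ v)).mul_left
    (commute_hadamardCol Zg hv')).mul_left (commute_czOn_op1_Zg _ _ v)

lemma commute_UTcPair_op1_Xg [NeZero N] {v : GIdx N D} {j : Fin D} (h₁ : (v.2 : ℕ) ≠ j)
    (h₂ : (v.2 : ℕ) ≠ j + 1) : Commute (UTcPair j) (op1 Xg v) := by
  have h₁' : v.2 ≠ j.castSucc := fun h => h₁ (by rw [h, Fin.val_castSucc])
  have h₂' : v.2 ≠ j.succ := fun h => h₂ (by rw [h, Fin.val_succ])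
  rw [UTcPair_eq]
  exact (((commute_hadamardCol Xg h₂').mul_left (commute_czCol_op1_Xg h₂')).mul_left
    (commute_hadamardCol Xg h₂')).mul_left (commute_czRows_op1_Xg h₁' h₂')

lemma semiconjBy_UTcPair_succ [NeZero N] (i : Fin N) (j : Fin D) :
    SemiconjBy (UTcPair j) X[i, j.succ] (Z[i, j.castSucc] * X[i, j.succ]) := by
  have hZ : Commute (hadamardCol j.succ) Z[i, j.castSucc] :=
    commute_hadamardCol Zg Fin.castSucc_lt_succ.ne
  have hV := semiconjBy_czRows_succ i j
  have hH₁ : SemiconjBy (hadamardCol j.succ) (Z[i, j.castSucc] * X[i, j.succ])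
      (Z[i, j.castSucc] * Z[i, j.succ]) :=
    SemiconjBy.mul_right hZ (semiconjBy_hadamardCol Hg_mul_Xg i j.succ)
  have hC : Commute (czCol j.succ) (Z[i, j.castSucc] * Z[i, j.succ]) :=
    (commute_czOn_op1_Zg _ _ _).mul_right (commute_czOn_op1_Zg _ _ _)
  have hH₂ : SemiconjBy (hadamardCol j.succ) (Z[i, j.castSucc] * Z[i, j.succ])
      (Z[i, j.castSucc] * X[i, j.succ]) :=
    SemiconjBy.mul_right hZ (semiconjBy_hadamardCol Hg_mul_Zg i j.succ)
  rw [UTcPair_eq]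
  exact ((hH₂.mul_left hC).mul_left hH₁).mul_left hV

lemma semiconjBy_UTcPair_castSucc [NeZero N] (hN : 2 ≤ N) (i : Fin N) (j : Fin D) :
    SemiconjBy (UTcPair j) X[i, j.castSucc]
      (X[i + 1, j.succ] * X[i - 1, j.succ] * Z[i, j.succ] * X[i, j.castSucc]) := by
  have hcol : ((i, j.castSucc) : GIdx N D).2 ≠ j.succ := Fin.castSucc_lt_succ.ne
  have hX : Commute (hadamardCol j.succ) X[i, j.castSucc] := commute_hadamardCol Xg hcol
  have hV := semiconjBy_czRows_castSucc i j
  have hH₁ : SemiconjBy (hadamardCol j.succ) (Z[i, j.succ] * X[i, j.castSucc])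
      (X[i, j.succ] * X[i, j.castSucc]) :=
    (semiconjBy_hadamardCol Hg_mul_Zg i j.succ).mul_right hX
  have hC : SemiconjBy (czCol j.succ) (X[i, j.succ] * X[i, j.castSucc])
      (Z[i + 1, j.succ] * Z[i - 1, j.succ] * X[i, j.succ] * X[i, j.castSucc]) :=
    (semiconjBy_czCol hN i j.succ).mul_right (commute_czCol_op1_Xg hcol)
  have hH₂ : SemiconjBy (hadamardCol j.succ)
      (Z[i + 1, j.succ] * Z[i - 1, j.succ] * X[i, j.succ] * X[i, j.castSucc])
      (X[i + 1, j.succ] * X[i - 1, j.succ] * Z[i, j.succ] * X[i, j.castSucc]) :=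
    (((semiconjBy_hadamardCol Hg_mul_Zg (i + 1) j.succ).mul_right
      (semiconjBy_hadamardCol Hg_mul_Zg (i - 1) j.succ)).mul_right
      (semiconjBy_hadamardCol Hg_mul_Xg i j.succ)).mul_right hX
  rw [UTcPair_eq]
  exact ((hH₂.mul_left hC).mul_left hH₁).mul_left hV

lemma semiconjBy_UTcPair_vertex [NeZero N] (hN : 2 ≤ N) (i : Fin N) (j : Fin D) :
    SemiconjBy (UTcPair j) (X[i, j.castSucc] * X[i - 1, j.succ] * X[i + 1, j.succ])
      (X[i, j.castSucc] * Z[i - 1, j.castSucc] * Z[i + 1, j.castSucc] * Z[i, j.succ]) := by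
  have hup : i - 1 ≠ i := by simpa using fin_one_ne_zero hN
  have hdown : i + 1 ≠ i := by simpa using fin_one_ne_zero hN
  have hcol : j.succ ≠ j.castSucc := Fin.castSucc_lt_succ.ne'
  have hXup : Commute X[i - 1, j.succ] (Z[i, j.succ] * X[i, j.castSucc] * Z[i - 1, j.castSucc]) :=
    ((commute_op1 _ _ (by simp [hup])).mul_right (commute_op1 _ _ (by simp [hcol]))).mul_right
      (commute_op1 _ _ (by simp [hcol]))
  have hXdown : Commute X[i + 1, j.succ]
      (Z[i, j.succ] * X[i, j.castSucc] * Z[i - 1, j.castSucc] * Z[i + 1, j.castSucc]) :=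
    (((commute_op1 _ _ (by simp [hdown])).mul_right (commute_op1 _ _ (by simp [hcol]))).mul_right
      (commute_op1 _ _ (by simp [hcol]))).mul_right (commute_op1 _ _ (by simp [hcol]))
  have hZ : Commute Z[i, j.succ] (X[i, j.castSucc] * Z[i - 1, j.castSucc] * Z[i + 1, j.castSucc]) :=
    ((commute_op1 _ _ (by simp [hcol])).mul_right (commute_op1 _ _ (by simp [hcol]))).mul_right
      (commute_op1 _ _ (by simp [hcol]))
  have hXX := op1_mul_op1_of_sq_eq_one (ι := GIdx N D) Xg_mul_Xg
  have key : X[i + 1, j.succ] * X[i - 1, j.succ] * Z[i, j.succ] * X[i, j.castSucc] *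
        (Z[i - 1, j.castSucc] * X[i - 1, j.succ]) * (Z[i + 1, j.castSucc] * X[i + 1, j.succ]) =
      X[i, j.castSucc] * Z[i - 1, j.castSucc] * Z[i + 1, j.castSucc] * Z[i, j.succ] := by
    calc _ = X[i + 1, j.succ] *
            (X[i - 1, j.succ] * (Z[i, j.succ] * X[i, j.castSucc] * Z[i - 1, j.castSucc]) *
              X[i - 1, j.succ]) * Z[i + 1, j.castSucc] * X[i + 1, j.succ] := by
          simp only [mul_assoc]
      _ = X[i + 1, j.succ] *
            (Z[i, j.succ] * X[i, j.castSucc] * Z[i - 1, j.castSucc] * Z[i + 1, j.castSucc]) *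
              X[i + 1, j.succ] := by
          rw [Commute.mul_mul_eq_self hXup (hXX _)]
          simp only [mul_assoc]
      _ = Z[i, j.succ] * (X[i, j.castSucc] * Z[i - 1, j.castSucc] * Z[i + 1, j.castSucc]) := by
          rw [Commute.mul_mul_eq_self hXdown (hXX _)]
          simp only [mul_assoc]
      _ = _ := hZ.eq
  rw [← key]
  exact ((semiconjBy_UTcPair_castSucc hN i j).mul_right
    (semiconjBy_UTcPair_succ (i - 1) j)).mul_right (semiconjBy_UTcPair_succ (i + 1) j)

lemma clusterState_eq_evolve [NeZero N] :
    clusterState N D = evolve UTcPair (ketPlusAll (GIdx N D)) D :=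
  (evolve_self _ _).symm

lemma mulVec_clusterState_right [NeZero N] (hD : 1 ≤ D) (i : Fin N) :
    (Z[i, ⟨D - 1, by omega⟩] * X[i, ⟨D, by omega⟩] : MatG N D) *ᵥ clusterState N D =
      clusterState N D := by
  let k : Fin D := ⟨D - 1, by omega⟩
  have hk : (⟨D, by omega⟩ : Fin (D + 1)) = k.succ :=
    Fin.ext (by simp only [k, Fin.val_succ]; omega)
  have hψ : clusterState N D = evolve UTcPair (ketPlusAll (GIdx N D)) (k + 1) := by
    rw [clusterState_eq_evolve]
    congr 1
    simp only [k]
    omega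
  rw [hψ, hk]
  refine mulVec_evolve_succ k (semiconjBy_UTcPair_succ i k) ?_
  refine mulVec_evolve_of_commute (Nat.zero_le _) k.is_lt.le (fun l _ hl =>
    commute_UTcPair_op1_Xg (by simp only [Fin.val_succ]; omega)
      (by simp only [Fin.val_succ]; omega)) ?_
  rw [evolve_zero, op1_Xg_mulVec_ketPlusAll]

lemma mulVec_clusterState_left [NeZero N] (hN : 2 ≤ N) (hD : 1 ≤ D) (i : Fin N) :
    (X[i, ⟨0, by omega⟩] * Z[i - 1, ⟨0, by omega⟩] * Z[i + 1, ⟨0, by omega⟩] *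
      Z[i, ⟨1, by omega⟩] : MatG N D) *ᵥ clusterState N D = clusterState N D := by
  let k : Fin D := ⟨0, hD⟩
  have hT : (X[i, k.castSucc] * X[i - 1, k.succ] * X[i + 1, k.succ]) *ᵥ
      evolve UTcPair (ketPlusAll (GIdx N D)) k = evolve UTcPair (ketPlusAll (GIdx N D)) k := by
    rw [show (k : ℕ) = 0 from rfl, evolve_zero]
    exact mulVec_ketPlusAll_of_three_Xg _ _ _
  rw [clusterState_eq_evolve]
  refine mulVec_evolve_of_commute hD le_rfl (fun l hl _ => ?_)
    (mulVec_evolve_succ k (semiconjBy_UTcPair_vertex hN i k) hT)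
  refine ((((commute_UTcPair_op1_Xg ?_ ?_).mul_right (commute_UTcPair_op1_Zg ?_)).mul_right
    (commute_UTcPair_op1_Zg ?_)).mul_right (commute_UTcPair_op1_Zg ?_)) <;> dsimp only <;> omega

lemma mulVec_clusterState_bulk [NeZero N] (hN : 2 ≤ N) (i : Fin N) {j : ℕ} (hj : j + 2 ≤ D) :
    (Z[i, ⟨j, by omega⟩] * X[i, ⟨j + 1, by omega⟩] * Z[i - 1, ⟨j + 1, by omega⟩] *
      Z[i + 1, ⟨j + 1, by omega⟩] * Z[i, ⟨j + 2, by omega⟩] : MatG N D) *ᵥ clusterState N D =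
      clusterState N D := by
  let k₁ : Fin D := ⟨j, by omega⟩
  let k₂ : Fin D := ⟨j + 1, hj⟩
  change (Z[i, k₁.castSucc] * X[i, k₂.castSucc] * Z[i - 1, k₂.castSucc] *
    Z[i + 1, k₂.castSucc] * Z[i, k₂.succ] : MatG N D) *ᵥ clusterState N D = clusterState N D
  set ψ := evolve (UTcPair (N := N) (D := D)) (ketPlusAll (GIdx N D))
  have hT₀ : (X[i, k₂.castSucc] * (X[i - 1, k₂.succ] * X[i + 1, k₂.succ])) *ᵥ ψ j = ψ j := by
    refine mulVec_evolve_of_commute (Nat.zero_le j) (by omega) (fun l _ hl => ?_) ?_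
    · refine (commute_UTcPair_op1_Xg ?_ ?_).mul_right
        ((commute_UTcPair_op1_Xg ?_ ?_).mul_right (commute_UTcPair_op1_Xg ?_ ?_)) <;>
        simp only [k₂, Fin.val_succ, Fin.val_castSucc] <;> omega
    · rw [evolve_zero, ← mul_assoc, mulVec_ketPlusAll_of_three_Xg]
  have hcomm : Commute (UTcPair k₁) (X[i - 1, k₂.succ] * X[i + 1, k₂.succ]) := by
    refine (commute_UTcPair_op1_Xg ?_ ?_).mul_right (commute_UTcPair_op1_Xg ?_ ?_) <;>
      simp only [k₁, k₂, Fin.val_succ] <;> omega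
  have hT₁ : (Z[i, k₁.castSucc] * X[i, k₂.castSucc] * (X[i - 1, k₂.succ] * X[i + 1, k₂.succ])) *ᵥ
      ψ (j + 1) = ψ (j + 1) :=
    mulVec_evolve_succ k₁ ((semiconjBy_UTcPair_succ i k₁).mul_right hcomm) hT₀
  have hS := mulVec_evolve_succ k₂ (SemiconjBy.mul_right
    (commute_UTcPair_op1_Zg (v := (i, k₁.castSucc)) (by simp only [k₁, Fin.val_castSucc]; omega))
    (semiconjBy_UTcPair_vertex hN i k₂)) (by simpa only [mul_assoc] using hT₁)
  rw [clusterState_eq_evolve]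
  refine mulVec_evolve_of_commute hj le_rfl (fun l hl _ => ?_) (by simpa only [mul_assoc] using hS)
  refine ((((commute_UTcPair_op1_Zg ?_).mul_right (commute_UTcPair_op1_Xg ?_ ?_)).mul_right
    (commute_UTcPair_op1_Zg ?_)).mul_right (commute_UTcPair_op1_Zg ?_)).mul_right
    (commute_UTcPair_op1_Zg ?_) <;> simp only [k₁, k₂, Fin.val_succ, Fin.val_castSucc] <;> omega

end Grid

/-- Mathematical columns `1,…,D+1` are the `Fin (D+1)` values `0,…,D`. -/
theorem cluster_state_stabilizers {N D : ℕ} [NeZero N] (hN : 3 ≤ N) (hD : 2 ≤ D) :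
    (∀ (i : Fin N) (j : Fin (D - 1)),
      (op1 Zg ((i, ⟨j.1, by have := j.2; omega⟩) : GIdx N D) *
        op1 Xg ((i, ⟨j.1 + 1, by have := j.2; omega⟩) : GIdx N D) *
        op1 Zg ((i - 1, ⟨j.1 + 1, by have := j.2; omega⟩) : GIdx N D) *
        op1 Zg ((i + 1, ⟨j.1 + 1, by have := j.2; omega⟩) : GIdx N D) *
        op1 Zg ((i, ⟨j.1 + 2, by have := j.2; omega⟩) : GIdx N D)).mulVec
          (clusterState N D) = clusterState N D) ∧
    (∀ i : Fin N,
      (op1 Xg ((i, ⟨0, by omega⟩) : GIdx N D) *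
        op1 Zg ((i - 1, ⟨0, by omega⟩) : GIdx N D) *
        op1 Zg ((i + 1, ⟨0, by omega⟩) : GIdx N D) *
        op1 Zg ((i, ⟨1, by omega⟩) : GIdx N D)).mulVec
          (clusterState N D) = clusterState N D) ∧
    (∀ i : Fin N,
      (op1 Zg ((i, ⟨D - 1, by omega⟩) : GIdx N D) *
        op1 Xg ((i, ⟨D, by omega⟩) : GIdx N D)).mulVec
          (clusterState N D) = clusterState N D) := by
  refine ⟨fun i j => ?_, fun i => mulVec_clusterState_left (by omega) (by omega) i,
    fun i => mulVec_clusterState_right (by omega) i⟩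
  exact mulVec_clusterState_bulk (by omega) i (by have := j.2; omega)

end QCA

end
end
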